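/- For u uniform in the unit ball of ℝ³ and a fixed vector ζ ∈ ℝ³ with |ζ| = ρ > 0, the expectation E(e^{-ζ·u}) = (3/ρ³)·(ρ cosh(ρ) − sinh(ρ)). -/

import Mathlib

/-!
Write `ζ = ρ v` with `‖v‖ = 1` and split the space isometrically as `ℝ v ⊕ (ℝ v)ᗮ`. By Fubini the
unit ball is sliced at height `t = ⟪v, u⟫` into balls of radius `√(1 - t²)` of `(ℝ v)ᗮ`; in
dimension three these are discs of area `π (1 - t²)`, so the integral is
`π ∫_{-1}^{1} e^{-ρ t} (1 - t²) dt = 4π (ρ cosh ρ - sinh ρ) / ρ³`, and the volume of the ball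
is `4π / 3`.
-/

open Real MeasureTheory Metric Module

section Slices

variable {F : Type*} [NormedAddCommGroup F]

lemma setOf_sq_add_norm_sq_le_one_eq_closedBall {t : ℝ} (ht : t ∈ Set.Icc (-1 : ℝ) 1) :
    {w : F | t ^ 2 + ‖w‖ ^ 2 ≤ 1} = closedBall 0 √(1 - t ^ 2) := by
  ext w
  rw [Set.mem_ofPred_eq, mem_closedBall, dist_zero_right,
    Real.le_sqrt (norm_nonneg _) (by nlinarith [ht.1, ht.2])]
  constructor <;> intro h <;> linarith

lemma setOf_sq_add_norm_sq_le_one_eq_empty {t : ℝ} (ht : t ∉ Set.Icc (-1 : ℝ) 1) :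
    {w : F | t ^ 2 + ‖w‖ ^ 2 ≤ 1} = ∅ := by
  rw [Set.mem_Icc, not_and_or, not_le, not_le] at ht
  refine Set.eq_empty_of_forall_notMem fun w hw => ?_
  have : 1 < t ^ 2 := by rcases ht with h | h <;> nlinarith
  nlinarith [sq_nonneg ‖w‖, hw.out]

variable [ProperSpace F]

lemma isCompact_setOf_sq_add_norm_sq_le_one :
    IsCompact {p : ℝ × F | p.1 ^ 2 + ‖p.2‖ ^ 2 ≤ 1} := by
  refine isCompact_of_isClosed_isBounded (isClosed_le (by fun_prop) continuous_const)
    (isBounded_closedBall (x := 0) (r := 1) |>.subset fun p hp => ?_)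
  simp only [Set.mem_ofPred_eq] at hp
  simp only [mem_closedBall, dist_zero_right, Prod.norm_def, Real.norm_eq_abs, sup_le_iff]
  constructor
  · rw [← sq_le_one_iff_abs_le_one]; nlinarith [sq_nonneg ‖p.2‖]
  · rw [← sq_le_one_iff₀ (norm_nonneg _)]; nlinarith [sq_nonneg p.1]

variable [MeasurableSpace F] [OpensMeasurableSpace F]

theorem setIntegral_sq_add_norm_sq_le_one_comp_fst (μ : Measure F) [IsFiniteMeasureOnCompacts μ]
    [SFinite μ] (f : ℝ → ℝ) (hf : Continuous f) :
    ∫ p in {p : ℝ × F | p.1 ^ 2 + ‖p.2‖ ^ 2 ≤ 1}, f p.1 ∂(volume.prod μ)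
      = ∫ t in (-1)..1, f t * μ.real (closedBall 0 √(1 - t ^ 2)) := by
  set S := {p : ℝ × F | p.1 ^ 2 + ‖p.2‖ ^ 2 ≤ 1}
  have hS : MeasurableSet S := isCompact_setOf_sq_add_norm_sq_le_one.isClosed.measurableSet
  have hint : IntegrableOn (fun p : ℝ × F => f p.1) S (volume.prod μ) :=
    (hf.comp continuous_fst).continuousOn.integrableOn_compact
      isCompact_setOf_sq_add_norm_sq_le_one
  have hslice : ∀ t, ∫ w, S.indicator (fun p => f p.1) (t, w) ∂μ
      = (Set.Icc (-1 : ℝ) 1).indicator (fun t => f t * μ.real (closedBall 0 √(1 - t ^ 2))) t := by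
    intro t
    have hSt : MeasurableSet {w : F | t ^ 2 + ‖w‖ ^ 2 ≤ 1} := measurable_prodMk_left hS
    rw [show (fun w => S.indicator (fun p => f p.1) (t, w))
        = {w : F | t ^ 2 + ‖w‖ ^ 2 ≤ 1}.indicator fun _ => f t from rfl,
      integral_indicator_const _ hSt, smul_eq_mul, mul_comm]
    by_cases ht : t ∈ Set.Icc (-1 : ℝ) 1
    · rw [Set.indicator_of_mem ht, setOf_sq_add_norm_sq_le_one_eq_closedBall ht]
    · rw [Set.indicator_of_notMem ht, setOf_sq_add_norm_sq_le_one_eq_empty ht]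
      simp
  rw [← integral_indicator hS, integral_prod _ ((integrable_indicator_iff hS).2 hint)]
  simp only [hslice]
  rw [integral_indicator measurableSet_Icc, integral_Icc_eq_integral_Ioc,
    intervalIntegral.integral_of_le (by norm_num)]

end Slices

section UnitVector

variable {E : Type*} [NormedAddCommGroup E] [InnerProductSpace ℝ E]

noncomputable def LinearIsometryEquiv.prodOrthogonalSpanUnitSingleton (v : E) (hv : ‖v‖ = 1) :
    WithLp 2 (ℝ × (ℝ ∙ v)ᗮ) ≃ₗᵢ[ℝ] E :=
  (withLpProdCongr 2 (toSpanUnitSingleton v hv) (refl ℝ _)).trans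
    (ℝ ∙ v).orthogonalDecomposition.symm

lemma LinearIsometryEquiv.prodOrthogonalSpanUnitSingleton_toLp (v : E) (hv : ‖v‖ = 1)
    (p : ℝ × (ℝ ∙ v)ᗮ) :
    prodOrthogonalSpanUnitSingleton v hv (WithLp.toLp 2 p) = p.1 • v + p.2 := by
  simp [prodOrthogonalSpanUnitSingleton]

lemma inner_smul_add_of_mem_orthogonal_span_singleton {v : E} (hv : ‖v‖ = 1) (t : ℝ)
    (w : (ℝ ∙ v)ᗮ) : inner ℝ v (t • v + (w : E)) = t := by
  rw [inner_add_right, real_inner_smul_right, real_inner_self_eq_norm_sq, hv,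
    Submodule.mem_orthogonal_singleton_iff_inner_right.1 w.2]
  ring

variable [FiniteDimensional ℝ E] [MeasurableSpace E] [BorelSpace E]

theorem setIntegral_closedBall_comp_inner {v : E} (hv : ‖v‖ = 1) (f : ℝ → ℝ)
    (hf : Continuous f) :
    ∫ u in closedBall (0 : E) 1, f (inner ℝ v u)
      = ∫ t in (-1)..1, f t * volume.real (closedBall (0 : (ℝ ∙ v)ᗮ) √(1 - t ^ 2)) := by
  set Φ := LinearIsometryEquiv.prodOrthogonalSpanUnitSingleton v hv
  have hmp : MeasurePreserving (fun p : ℝ × (ℝ ∙ v)ᗮ => Φ (WithLp.toLp 2 p)) :=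
    Φ.measurePreserving.comp (WithLp.volume_preserving_toLp ℝ _)
  have hemb : MeasurableEmbedding (fun p : ℝ × (ℝ ∙ v)ᗮ => Φ (WithLp.toLp 2 p)) :=
    ((MeasurableEquiv.toLp 2 _).trans Φ.toMeasurableEquiv).measurableEmbedding
  have hpre : (fun p : ℝ × (ℝ ∙ v)ᗮ => Φ (WithLp.toLp 2 p)) ⁻¹' closedBall 0 1
      = {p | p.1 ^ 2 + ‖p.2‖ ^ 2 ≤ 1} := by
    ext p
    rw [Set.mem_preimage, mem_closedBall_zero_iff, LinearIsometryEquiv.norm_map,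
      ← sq_le_one_iff₀ (norm_nonneg _), WithLp.prod_norm_sq_eq_of_L2]
    simp
  rw [← hmp.setIntegral_preimage_emb hemb, hpre, Measure.volume_eq_prod]
  simp only [Φ, LinearIsometryEquiv.prodOrthogonalSpanUnitSingleton_toLp,
    inner_smul_add_of_mem_orthogonal_span_singleton hv]
  exact setIntegral_sq_add_norm_sq_le_one_comp_fst volume f hf

lemma volume_real_closedBall_of_finrank_eq_two (hE : finrank ℝ E = 2) (x : E) {r : ℝ}
    (hr : 0 ≤ r) : volume.real (closedBall x r) = π * r ^ 2 := by
  have : Nontrivial E := Module.nontrivial_of_finrank_eq_succ hE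
  rw [measureReal_def, InnerProductSpace.volume_closedBall_of_dim_even (k := 1) hE, hE,
    ← ENNReal.ofReal_pow hr, ← ENNReal.ofReal_mul (by positivity),
    ENNReal.toReal_ofReal (by positivity)]
  simp [mul_comm]

theorem setIntegral_closedBall_comp_inner_of_finrank_eq_three (hE : finrank ℝ E = 3) {v : E}
    (hv : ‖v‖ = 1) (f : ℝ → ℝ) (hf : Continuous f) :
    ∫ u in closedBall (0 : E) 1, f (inner ℝ v u) = π * ∫ t in (-1)..1, f t * (1 - t ^ 2) := by
  have : Fact (finrank ℝ E = 2 + 1) := ⟨hE⟩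
  have hW : finrank ℝ (ℝ ∙ v)ᗮ = 2 :=
    Submodule.finrank_orthogonal_span_singleton (by rintro rfl; simp at hv)
  rw [setIntegral_closedBall_comp_inner hv f hf, ← intervalIntegral.integral_const_mul]
  refine intervalIntegral.integral_congr fun t ht => ?_
  rw [Set.uIcc_of_le (by norm_num)] at ht
  have ht2 : 0 ≤ 1 - t ^ 2 := by nlinarith [ht.1, ht.2]
  simp only [volume_real_closedBall_of_finrank_eq_two hW 0 (sqrt_nonneg _), sq_sqrt ht2]
  ring

end UnitVector

lemma integral_exp_neg_mul_mul_one_sub_sq {ρ : ℝ} (hρ : ρ ≠ 0) :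
    ∫ t in (-1)..1, exp (-(ρ * t)) * (1 - t ^ 2) = 4 / ρ ^ 3 * (ρ * cosh ρ - sinh ρ) := by
  have hderiv : ∀ t, HasDerivAt
      (fun t => exp (-(ρ * t)) * ((t ^ 2 - 1) / ρ + 2 * t / ρ ^ 2 + 2 / ρ ^ 3))
      (exp (-(ρ * t)) * (1 - t ^ 2)) t := fun t => by
    have hexp := ((hasDerivAt_id' t).const_mul ρ).fun_neg.exp
    have hpoly := ((((hasDerivAt_pow 2 t).sub_const 1).div_const ρ).fun_add
      (((hasDerivAt_id' t).const_mul 2).div_const (ρ ^ 2))).add_const (2 / ρ ^ 3)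
    exact (hexp.mul hpoly).congr_deriv (by field_simp; ring)
  rw [intervalIntegral.integral_eq_sub_of_hasDerivAt (fun t _ => hderiv t)
    (Continuous.intervalIntegrable (by fun_prop) _ _), cosh_eq, sinh_eq]
  field_simp
  ring

theorem ball_average_exp_inner (ζ : EuclideanSpace ℝ (Fin 3)) (ρ : ℝ)
    (hρ : 0 < ρ) (hζ : ‖ζ‖ = ρ) :
    (⨍ u in Metric.closedBall (0 : EuclideanSpace ℝ (Fin 3)) 1,
        Real.exp (-(inner ℝ ζ u : ℝ)) ∂volume)
      = (3 / ρ ^ 3) * (ρ * Real.cosh ρ - Real.sinh ρ) := by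
  have hv : ‖ρ⁻¹ • ζ‖ = 1 := by
    rw [norm_smul, hζ, norm_inv, Real.norm_of_nonneg hρ.le, inv_mul_cancel₀ hρ.ne']
  have hinner : ∀ u, inner ℝ ζ u = ρ * inner ℝ (ρ⁻¹ • ζ) u := fun u => by
    rw [real_inner_smul_left, mul_inv_cancel_left₀ hρ.ne']
  simp_rw [hinner]
  rw [setAverage_eq, setIntegral_closedBall_comp_inner_of_finrank_eq_three
      finrank_euclideanSpace_fin hv (fun t => exp (-(ρ * t))) (by fun_prop),
    integral_exp_neg_mul_mul_one_sub_sq hρ.ne', measureReal_def,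
    EuclideanSpace.volume_closedBall_fin_three, ENNReal.ofReal_one, one_pow, one_mul,
    ENNReal.toReal_ofReal (by positivity), smul_eq_mul]
  field_simp
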